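/- arXiv:1708.03239 — 10 statements merged into one kernel-verified Lean document; each statement's English description precedes it below -/
import Mathlib

section
/- Let w1, w2, w3, w4, w5 be positive real numbers. Then they satisfy the free-fermionic relations w1*w4 = w3*w5, w2*w3 = w4*w5, and w5*(w1+w2) = w3*w4 if and only if there exists a unique triple (λ, a, b) of positive real numbers with a² + b² = 1 such that w1 = λa², w2 = λb², w3 = λa, w4 = λb, w5 = λab. -/
/-!
Summing the first two weights of a parametrization gives `λ (a² + b²) = λ`, so necessarily
`λ = w1 + w2`, `a = w3 / λ` and `b = w4 / λ`; this is the uniqueness. Conversely, eliminating `w5`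
from the free-fermionic relations gives `w1 (w1 + w2) = w3²` and `w2 (w1 + w2) = w4²`, which say
exactly that these values of `(λ, a, b)` parametrize the weights.
-/

section

variable {R : Type*}

def FreeFermionic [Mul R] [Add R] (w1 w2 w3 w4 w5 : R) : Prop :=
  w1 * w4 = w3 * w5 ∧ w2 * w3 = w4 * w5 ∧ w5 * (w1 + w2) = w3 * w4

/-- `l` stands for the paper's `λ`. -/
def IsFreeFermionicParam [Monoid R] [Add R] (w1 w2 w3 w4 w5 l a b : R) : Prop :=
  a ^ 2 + b ^ 2 = 1 ∧ w1 = l * a ^ 2 ∧ w2 = l * b ^ 2 ∧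
    w3 = l * a ∧ w4 = l * b ∧ w5 = l * a * b

variable {w1 w2 w3 w4 w5 l a b : R}

theorem IsFreeFermionicParam.freeFermionic [CommRing R]
    (h : IsFreeFermionicParam w1 w2 w3 w4 w5 l a b) : FreeFermionic w1 w2 w3 w4 w5 := by
  obtain ⟨hab, rfl, rfl, rfl, rfl, rfl⟩ := h
  exact ⟨by ring, by ring, by linear_combination l ^ 2 * a * b * hab⟩

theorem IsFreeFermionicParam.add_eq [CommRing R]
    (h : IsFreeFermionicParam w1 w2 w3 w4 w5 l a b) : w1 + w2 = l := by
  obtain ⟨hab, rfl, rfl, -⟩ := h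
  linear_combination l * hab

theorem IsFreeFermionicParam.eq_of_ne_zero [Field R]
    (h : IsFreeFermionicParam w1 w2 w3 w4 w5 l a b) (hl : l ≠ 0) :
    (l, a, b) = (w1 + w2, w3 / (w1 + w2), w4 / (w1 + w2)) := by
  rw [h.add_eq]
  obtain ⟨-, -, -, rfl, rfl, -⟩ := h
  rw [mul_div_cancel_left₀ a hl, mul_div_cancel_left₀ b hl]

theorem FreeFermionic.mul_add_eq_sq [CommRing R] [IsDomain R]
    (h : FreeFermionic w1 w2 w3 w4 w5) (h3 : w3 ≠ 0) (h4 : w4 ≠ 0) :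
    w1 * (w1 + w2) = w3 ^ 2 ∧ w2 * (w1 + w2) = w4 ^ 2 := by
  obtain ⟨e1, e2, e3⟩ := h
  constructor
  · refine mul_left_cancel₀ h4 ?_
    linear_combination (w1 + w2) * e1 + w3 * e3
  · refine mul_left_cancel₀ h3 ?_
    linear_combination (w1 + w2) * e2 + w4 * e3

theorem FreeFermionic.isFreeFermionicParam [Field R]
    (h : FreeFermionic w1 w2 w3 w4 w5) (h3 : w3 ≠ 0) (h4 : w4 ≠ 0) (hs : w1 + w2 ≠ 0) :
    IsFreeFermionicParam w1 w2 w3 w4 w5 (w1 + w2) (w3 / (w1 + w2)) (w4 / (w1 + w2)) := by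
  obtain ⟨k3, k4⟩ := h.mul_add_eq_sq h3 h4
  obtain ⟨-, -, e3⟩ := h
  refine ⟨?_, ?_, ?_, ?_, ?_, ?_⟩ <;> field_simp
  · linear_combination -k3 - k4
  · linear_combination k3
  · linear_combination k4
  · linear_combination e3

end

theorem free_fermionic_parametrization_general
    (w1 w2 w3 w4 w5 : ℝ) (h1 : 0 < w1) (h2 : 0 < w2) (h3 : 0 < w3)
    (h4 : 0 < w4) :
    (w1 * w4 = w3 * w5 ∧ w2 * w3 = w4 * w5 ∧ w5 * (w1 + w2) = w3 * w4) ↔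
    ∃! p : ℝ × ℝ × ℝ, 0 < p.1 ∧ 0 < p.2.1 ∧ 0 < p.2.2 ∧
      p.2.1 ^ 2 + p.2.2 ^ 2 = 1 ∧
      w1 = p.1 * p.2.1 ^ 2 ∧ w2 = p.1 * p.2.2 ^ 2 ∧
      w3 = p.1 * p.2.1 ∧ w4 = p.1 * p.2.2 ∧ w5 = p.1 * p.2.1 * p.2.2 := by
  refine ⟨fun h => ?_, fun ⟨_, ⟨_, _, _, hp⟩, _⟩ => IsFreeFermionicParam.freeFermionic hp⟩
  have hs : 0 < w1 + w2 := by positivity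
  refine ⟨(w1 + w2, w3 / (w1 + w2), w4 / (w1 + w2)),
    ⟨hs, by positivity, by positivity, FreeFermionic.isFreeFermionicParam h h3.ne' h4.ne' hs.ne'⟩,
    fun ⟨l, a, b⟩ ⟨hl, _, _, hp⟩ => IsFreeFermionicParam.eq_of_ne_zero hp hl.ne'⟩

theorem free_fermionic_parametrization
    (w1 w2 w3 w4 w5 : ℝ) (h1 : 0 < w1) (h2 : 0 < w2) (h3 : 0 < w3)
    (h4 : 0 < w4) (h5 : 0 < w5) :
    (w1 * w4 = w3 * w5 ∧ w2 * w3 = w4 * w5 ∧ w5 * (w1 + w2) = w3 * w4) ↔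
    ∃! p : ℝ × ℝ × ℝ, 0 < p.1 ∧ 0 < p.2.1 ∧ 0 < p.2.2 ∧
      p.2.1 ^ 2 + p.2.2 ^ 2 = 1 ∧
      w1 = p.1 * p.2.1 ^ 2 ∧ w2 = p.1 * p.2.2 ^ 2 ∧
      w3 = p.1 * p.2.1 ∧ w4 = p.1 * p.2.2 ∧ w5 = p.1 * p.2.1 * p.2.2 :=
  free_fermionic_parametrization_general w1 w2 w3 w4 w5 h1 h2 h3 h4
end

section
/- Let g, g1, g2, g3, g12, g13, g23 be positive real numbers satisfying Kashaev's relation with g123 = (2g1g2g3 + g(g1g23 + g2g13 + g3g12) + 2XYZ)/g², where X = √(g·g23 + g2·g3), Y = √(g·g13 + g1·g3), Z = √(g·g12 + g1·g2). Define X1 = √(g1·g123 + g12·g13). Then X1 = (g1·X + Y·Z)/g. -/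
theorem kashaev_X1_formula
    (g g1 g2 g3 g12 g13 g23 X Y Z g123 X1 : ℝ)
    (hg : 0 < g) (hg1 : 0 < g1) (hg2 : 0 < g2) (hg3 : 0 < g3)
    (hg12 : 0 < g12) (hg13 : 0 < g13) (hg23 : 0 < g23)
    (hX : X = Real.sqrt (g * g23 + g2 * g3))
    (hY : Y = Real.sqrt (g * g13 + g1 * g3))
    (hZ : Z = Real.sqrt (g * g12 + g1 * g2))
    (hg123 : g123 = (2 * g1 * g2 * g3 + g * (g1 * g23 + g2 * g13 + g3 * g12)
      + 2 * X * Y * Z) / g ^ 2)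
    (hrel : g ^ 2 * g123 ^ 2 + g1 ^ 2 * g23 ^ 2 + g2 ^ 2 * g13 ^ 2 + g3 ^ 2 * g12 ^ 2
      - 2 * g2 * g3 * g13 * g12 - 2 * g1 * g3 * g23 * g12 - 2 * g1 * g2 * g23 * g13
      - 2 * g * g123 * (g1 * g23 + g2 * g13 + g3 * g12)
      - 4 * g * g12 * g23 * g13 - 4 * g123 * g1 * g2 * g3 = 0)
    (hX1 : X1 = Real.sqrt (g1 * g123 + g12 * g13)) :
    X1 = (g1 * X + Y * Z) / g := by
  have hXnn : 0 ≤ X := hX ▸ Real.sqrt_nonneg _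
  have hYnn : 0 ≤ Y := hY ▸ Real.sqrt_nonneg _
  have hZnn : 0 ≤ Z := hZ ▸ Real.sqrt_nonneg _
  have hX2 : X ^ 2 = g * g23 + g2 * g3 := by
    rw [hX, Real.sq_sqrt]; positivity
  have hY2 : Y ^ 2 = g * g13 + g1 * g3 := by
    rw [hY, Real.sq_sqrt]; positivity
  have hZ2 : Z ^ 2 = g * g12 + g1 * g2 := by
    rw [hZ, Real.sq_sqrt]; positivity
  have hkey : g1 * g123 + g12 * g13 = ((g1 * X + Y * Z) / g) ^ 2 := by
    rw [hg123]
    field_simp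
    nlinarith [hX2, hY2, hZ2, sq_nonneg (g1 * X + Y * Z)]
  rw [hX1, hkey, Real.sqrt_sq (by positivity)]
end

section
/- Let g, g1, g2, g3, g12, g13, g23 be positive reals, X = √(g·g23 + g2·g3), Y = √(g·g13 + g1·g3), Z = √(g·g12 + g1·g2), and let g123 = (2g1g2g3 + g(g1g23 + g2g13 + g3g12) + 2XYZ)/g². Define X1 = (g1X + YZ)/g, Y2 = (g2Y + XZ)/g, Z3 = (g3Z + XY)/g. Then (X1·Y2·Z3 + g12·g13·g23)/g123 = (X·Y·Z + g1·g2·g3)/g. -/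
/-!
Clearing denominators, the claim becomes
`X1 Y2 Z3 g³ + g³ g12 g13 g23 = g² g123 (XYZ + g1 g2 g3)`.
A pure ring identity, valid for arbitrary `X, Y, Z`, says that
`(g1 X + YZ)(g2 Y + XZ)(g3 Z + XY) + (X² - g2 g3)(Y² - g1 g3)(Z² - g1 g2)` factors as
`(2XYZ + g1 X² + g2 Y² + g3 Z² - g1 g2 g3)(XYZ + g1 g2 g3)`.
By the definitions of `X, Y, Z` the second summand is `g³ g12 g13 g23` and the first factor is
`g² g123`.
-/

theorem kashaev_product_identity {R : Type*} [CommRing R] (g1 g2 g3 X Y Z : R) :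
    (g1 * X + Y * Z) * (g2 * Y + X * Z) * (g3 * Z + X * Y)
      + (X ^ 2 - g2 * g3) * (Y ^ 2 - g1 * g3) * (Z ^ 2 - g1 * g2)
      = (2 * X * Y * Z + g1 * X ^ 2 + g2 * Y ^ 2 + g3 * Z ^ 2 - g1 * g2 * g3)
        * (X * Y * Z + g1 * g2 * g3) := by
  ring

theorem kashaev_self_dual_invariant
    (g g1 g2 g3 g12 g13 g23 X Y Z g123 X1 Y2 Z3 : ℝ)
    (hg : 0 < g) (hg1 : 0 < g1) (hg2 : 0 < g2) (hg3 : 0 < g3)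
    (hg12 : 0 < g12) (hg13 : 0 < g13) (hg23 : 0 < g23)
    (hX : X = Real.sqrt (g * g23 + g2 * g3))
    (hY : Y = Real.sqrt (g * g13 + g1 * g3))
    (hZ : Z = Real.sqrt (g * g12 + g1 * g2))
    (hg123 : g123 = (2 * g1 * g2 * g3 + g * (g1 * g23 + g2 * g13 + g3 * g12)
      + 2 * X * Y * Z) / g ^ 2)
    (hX1 : X1 = (g1 * X + Y * Z) / g)
    (hY2 : Y2 = (g2 * Y + X * Z) / g)
    (hZ3 : Z3 = (g3 * Z + X * Y) / g) :
    (X1 * Y2 * Z3 + g12 * g13 * g23) / g123 = (X * Y * Z + g1 * g2 * g3) / g := by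
  have hXsq : X ^ 2 = g * g23 + g2 * g3 := hX ▸ Real.sq_sqrt (by positivity)
  have hYsq : Y ^ 2 = g * g13 + g1 * g3 := hY ▸ Real.sq_sqrt (by positivity)
  have hZsq : Z ^ 2 = g * g12 + g1 * g2 := hZ ▸ Real.sq_sqrt (by positivity)
  have hnum : 0 < 2 * g1 * g2 * g3 + g * (g1 * g23 + g2 * g13 + g3 * g12) + 2 * X * Y * Z := by
    subst hX hY hZ
    positivity
  have key := kashaev_product_identity g1 g2 g3 X Y Z
  rw [hXsq, hYsq, hZsq] at key
  subst hX1 hY2 hZ3 hg123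
  rw [div_eq_div_iff (by positivity) hg.ne']
  field_simp
  linear_combination key
end

section
/- Let g, g1, g2, g3, g12, g13, g23 be positive reals, X = √(g·g23 + g2·g3), Y = √(g·g13 + g1·g3), Z = √(g·g12 + g1·g2), g123 = (2g1g2g3 + g(g1g23 + g2g13 + g3g12) + 2XYZ)/g², X1 = (g1X + YZ)/g, Y2 = (g2Y + XZ)/g, Z3 = (g3Z + XY)/g. Then X1·Z3 = (2g1g2g3·Y)/g² + (2g1g3·XZ)/g² + (g13·XZ)/g + (g1·g23·Y)/g + (g3·g12·Y)/g. -/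
/-!
Clearing the denominator `g ^ 2`, the product `(g1 X + Y Z)(g3 Z + X Y)` contains each of
`X`, `Y`, `Z` squared exactly once; replacing the squares by the radicands
`X² = g g23 + g2 g3`, `Y² = g g13 + g1 g3`, `Z² = g g12 + g1 g2` gives the right-hand side.
-/

theorem kashaev_X1_mul_Z3_of_sq {K : Type*} [Field K]
    (g g1 g2 g3 g12 g13 g23 X Y Z : K) (hg : g ≠ 0)
    (hX : X ^ 2 = g * g23 + g2 * g3) (hY : Y ^ 2 = g * g13 + g1 * g3)
    (hZ : Z ^ 2 = g * g12 + g1 * g2) :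
    (g1 * X + Y * Z) / g * ((g3 * Z + X * Y) / g) =
      (2 * g1 * g2 * g3 * Y) / g ^ 2 + (2 * g1 * g3 * (X * Z)) / g ^ 2
        + (g13 * (X * Z)) / g + (g1 * g23 * Y) / g + (g3 * g12 * Y) / g := by
  field_simp
  linear_combination (g1 * Y) * hX + (X * Z) * hY + (g3 * Y) * hZ

theorem kashaev_X1Z3_expansion_general
    (g g1 g2 g3 g12 g13 g23 X Y Z X1 Z3 : ℝ)
    (hg : 0 < g) (hg1 : 0 < g1) (hg2 : 0 < g2) (hg3 : 0 < g3)
    (hg12 : 0 < g12) (hg13 : 0 < g13) (hg23 : 0 < g23)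
    (hX : X = Real.sqrt (g * g23 + g2 * g3))
    (hY : Y = Real.sqrt (g * g13 + g1 * g3))
    (hZ : Z = Real.sqrt (g * g12 + g1 * g2))
    (hX1 : X1 = (g1 * X + Y * Z) / g)
    (hZ3 : Z3 = (g3 * Z + X * Y) / g) :
    X1 * Z3 = (2 * g1 * g2 * g3 * Y) / g ^ 2 + (2 * g1 * g3 * (X * Z)) / g ^ 2
      + (g13 * (X * Z)) / g + (g1 * g23 * Y) / g + (g3 * g12 * Y) / g := by
  have hX2 : X ^ 2 = g * g23 + g2 * g3 := hX ▸ Real.sq_sqrt (by positivity)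
  have hY2 : Y ^ 2 = g * g13 + g1 * g3 := hY ▸ Real.sq_sqrt (by positivity)
  have hZ2 : Z ^ 2 = g * g12 + g1 * g2 := hZ ▸ Real.sq_sqrt (by positivity)
  rw [hX1, hZ3]
  exact kashaev_X1_mul_Z3_of_sq g g1 g2 g3 g12 g13 g23 X Y Z hg.ne' hX2 hY2 hZ2

theorem kashaev_X1Z3_expansion
    (g g1 g2 g3 g12 g13 g23 X Y Z g123 X1 Y2 Z3 : ℝ)
    (hg : 0 < g) (hg1 : 0 < g1) (hg2 : 0 < g2) (hg3 : 0 < g3)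
    (hg12 : 0 < g12) (hg13 : 0 < g13) (hg23 : 0 < g23)
    (hX : X = Real.sqrt (g * g23 + g2 * g3))
    (hY : Y = Real.sqrt (g * g13 + g1 * g3))
    (hZ : Z = Real.sqrt (g * g12 + g1 * g2))
    (hg123 : g123 = (2 * g1 * g2 * g3 + g * (g1 * g23 + g2 * g13 + g3 * g12)
      + 2 * X * Y * Z) / g ^ 2)
    (hX1 : X1 = (g1 * X + Y * Z) / g)
    (hY2 : Y2 = (g2 * Y + X * Z) / g)
    (hZ3 : Z3 = (g3 * Z + X * Y) / g) :
    X1 * Z3 = (2 * g1 * g2 * g3 * Y) / g ^ 2 + (2 * g1 * g3 * (X * Z)) / g ^ 2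
      + (g13 * (X * Z)) / g + (g1 * g23 * Y) / g + (g3 * g12 * Y) / g :=
  kashaev_X1Z3_expansion_general g g1 g2 g3 g12 g13 g23 X Y Z X1 Z3 hg hg1 hg2 hg3 hg12 hg13 hg23 hX
    hY hZ hX1 hZ3
end

section
/- Let g, g1, g2, g3, g12, g13, g23 be positive reals and define X, Y, Z, g123, X1, Y2, Z3 as in Kashaev's recurrence: X = √(g·g23+g2·g3), Y = √(g·g13+g1·g3), Z = √(g·g12+g1·g2), g123 = (2g1g2g3 + g(g1g23+g2g13+g3g12) + 2XYZ)/g², X1 = (g1X+YZ)/g, Y2 = (g2Y+XZ)/g, Z3 = (g3Z+XY)/g. Then X1² = g1·g123 + g12·g13, Y2² = g2·g123 + g12·g23, and Z3² = g3·g123 + g13·g23. -/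
theorem kashaev_face_variables
    (g g1 g2 g3 g12 g13 g23 X Y Z g123 X1 Y2 Z3 : ℝ)
    (hg : 0 < g) (hg1 : 0 < g1) (hg2 : 0 < g2) (hg3 : 0 < g3)
    (hg12 : 0 < g12) (hg13 : 0 < g13) (hg23 : 0 < g23)
    (hX : X = Real.sqrt (g * g23 + g2 * g3))
    (hY : Y = Real.sqrt (g * g13 + g1 * g3))
    (hZ : Z = Real.sqrt (g * g12 + g1 * g2))
    (hg123 : g123 = (2 * g1 * g2 * g3 + g * (g1 * g23 + g2 * g13 + g3 * g12)
      + 2 * X * Y * Z) / g ^ 2)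
    (hX1 : X1 = (g1 * X + Y * Z) / g)
    (hY2 : Y2 = (g2 * Y + X * Z) / g)
    (hZ3 : Z3 = (g3 * Z + X * Y) / g) :
    X1 ^ 2 = g1 * g123 + g12 * g13 ∧
    Y2 ^ 2 = g2 * g123 + g12 * g23 ∧
    Z3 ^ 2 = g3 * g123 + g13 * g23 := by
  have hX2 : X ^ 2 = g * g23 + g2 * g3 := by
    rw [hX, Real.sq_sqrt]; positivity
  have hY2' : Y ^ 2 = g * g13 + g1 * g3 := by
    rw [hY, Real.sq_sqrt]; positivity
  have hZ2' : Z ^ 2 = g * g12 + g1 * g2 := by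
    rw [hZ, Real.sq_sqrt]; positivity
  have hg0 : g ≠ 0 := ne_of_gt hg
  refine ⟨?_, ?_, ?_⟩
  · rw [hX1, hg123]; field_simp; ring_nf
    linear_combination g1^2*hX2 + Z^2*hY2' + (g*g13+g1*g3)*hZ2'
  · rw [hY2, hg123]; field_simp; ring_nf
    linear_combination g2^2*hY2' + Z^2*hX2 + (g*g23+g2*g3)*hZ2'
  · rw [hZ3, hg123]; field_simp; ring_nf
    linear_combination g3^2*hZ2' + Y^2*hX2 + (g*g23+g2*g3)*hY2'
end

section
/- Fix positive reals a, b and R, S > 0 satisfying R²S² − 6RS − 4R − 4S − 3 = 0. Define sequences Y and X by Y_{2n} = a^{1−2n} b^{2n} R^{n²} S^{n²−n}, Y_{2n+1} = a^{−2n} b^{2n+1} R^{n²+n} S^{n²}, X_{2n} = √(1+R)·Y_{2n+1}, X_{2n+1} = √(1+S)·Y_{2n+2} for n ≥ 0. Then X_N² = Y_N·Y_{N+2} + Y_{N+1}² holds for all N ≥ 0. -/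
theorem kashaev_height_solution
    (a b c R S : ℝ) (ha : 0 < a) (hb : 0 < b) (hc : 0 < c)
    (hR : R = a * c / b ^ 2) (hS : 0 < S)
    (hrel : R ^ 2 * S ^ 2 - 6 * R * S - 4 * R - 4 * S - 3 = 0)
    (Y X : ℕ → ℝ)
    (hY0 : ∀ n : ℕ, Y (2 * n) =
      a ^ (1 - 2 * (n : ℤ)) * b ^ (2 * n) * R ^ ((n : ℤ) ^ 2) * S ^ ((n : ℤ) ^ 2 - n))
    (hY1 : ∀ n : ℕ, Y (2 * n + 1) =
      a ^ (-2 * (n : ℤ)) * b ^ (2 * n + 1) * R ^ ((n : ℤ) ^ 2 + n) * S ^ ((n : ℤ) ^ 2))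
    (hX0 : ∀ n : ℕ, X (2 * n) = Real.sqrt (1 + R) * Y (2 * n + 1))
    (hX1 : ∀ n : ℕ, X (2 * n + 1) = Real.sqrt (1 + S) * Y (2 * n + 2)) :
    ∀ N : ℕ, X N ^ 2 = Y N * Y (N + 2) + Y (N + 1) ^ 2 := by
  have hRpos : 0 < R := by rw [hR]; positivity
  have conv : ∀ x : ℝ, 0 < x → ∀ p : ℤ, x ^ p = Real.exp ((p : ℝ) * Real.log x) := by
    intro x hx p
    rw [← Real.rpow_intCast, Real.rpow_def_of_pos hx, mul_comm]
  have convn : ∀ x : ℝ, 0 < x → ∀ m : ℕ, x ^ m = Real.exp ((m : ℝ) * Real.log x) := by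
    intro x hx m
    rw [← Real.rpow_natCast, Real.rpow_def_of_pos hx, mul_comm]
  intro N
  obtain ⟨n, rfl | rfl⟩ := Nat.even_or_odd' N
  · have key : Y (2 * n) * Y (2 * n + 2) = R * Y (2 * n + 1) ^ 2 := by
      rw [show 2 * n + 2 = 2 * (n + 1) from by ring, hY0 (n + 1), hY0 n, hY1 n]
      simp only [conv a ha, conv R hRpos, conv S hS, convn b hb]
      rw [← Real.exp_log hRpos]
      simp only [Real.log_exp, ← Real.exp_nat_mul, ← Real.exp_add]
      congr 1
      push_cast
      ring
    rw [hX0 n, mul_pow, Real.sq_sqrt (by positivity), key]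
    ring
  · have key : Y (2 * n + 1) * Y (2 * n + 1 + 2) = S * Y (2 * n + 1 + 1) ^ 2 := by
      rw [show 2 * n + 1 + 2 = 2 * (n + 1) + 1 from by ring,
        show 2 * n + 1 + 1 = 2 * (n + 1) from by ring,
        hY1 (n + 1), hY1 n, hY0 (n + 1)]
      simp only [conv a ha, conv R hRpos, conv S hS, convn b hb]
      rw [← Real.exp_log hS]
      simp only [Real.log_exp, ← Real.exp_nat_mul, ← Real.exp_add]
      congr 1
      push_cast
      ring
    rw [hX1 n, mul_pow, Real.sq_sqrt (by positivity),
      show 2 * n + 2 = 2 * n + 1 + 1 from by ring, key]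
    ring
end

section
/- Let G be a connected finite planar quadrangulation with boundary (all bounded faces are quadrilaterals), let V, E, F, T denote its sets of vertices, edges, internal faces, and train tracks, and let E_ext be the edges adjacent to the external face. If no train track is a loop, then |T| + 1 = |V| − |F|. -/
open Finset

/-- Combinatorial data of a finite bipartite quadrangulation with boundary:
vertices `V`, internal faces `F`, each face having black vertices `x f, y f` and
white vertices `u f, v f`, in cyclic order `x f, u f, y f, v f`. -/
structure QuadData (V F : Type*) where
  x : F → V
  y : F → V
  u : F → V
  v : F → V
  /-- a bipartite coloring of the vertices -/
  color : V → Bool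
  colx : ∀ f, color (x f) = true
  coly : ∀ f, color (y f) = true
  colu : ∀ f, color (u f) = false
  colv : ∀ f, color (v f) = false
  xy : ∀ f, x f ≠ y f
  uv : ∀ f, u f ≠ v f

namespace QuadData

variable {V F : Type*} [Fintype V] [DecidableEq V] [Fintype F] [DecidableEq F]
variable (Q : QuadData V F)

/-- The four sides of a face. -/
def sides (f : F) : Finset (Sym2 V) :=
  {s(Q.x f, Q.u f), s(Q.u f, Q.y f), s(Q.y f, Q.v f), s(Q.v f, Q.x f)}

/-- The edge set: all sides of internal faces. -/
def edgeSet : Finset (Sym2 V) := Finset.univ.biUnion Q.sides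

/-- The number of internal faces adjacent to an edge. -/
def faceCount (e : Sym2 V) : ℕ := (Finset.univ.filter (fun f => e ∈ Q.sides f)).card

/-- The underlying simple graph. -/
def graph : SimpleGraph V := SimpleGraph.fromRel (fun a b => s(a, b) ∈ Q.edgeSet)

/-- Proper quadrangulation with boundary: every edge borders at most two internal
faces, the graph is connected, and Euler's formula (planarity) holds. -/
structure IsProper : Prop where
  edge_le_two : ∀ e ∈ Q.edgeSet, Q.faceCount e ≤ 2
  connected : Q.graph.Connected
  euler : (Fintype.card V : ℤ) - (Q.edgeSet.card : ℤ) + (Fintype.card F : ℤ) = 1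

/-- Two edges are opposite in a face: a train track entering a face through one
of them exits through the other. -/
def Opp (e e' : Sym2 V) : Prop :=
  ∃ f : F, (e = s(Q.x f, Q.u f) ∧ e' = s(Q.y f, Q.v f)) ∨
    (e = s(Q.y f, Q.v f) ∧ e' = s(Q.x f, Q.u f)) ∨
    (e = s(Q.u f, Q.y f) ∧ e' = s(Q.v f, Q.x f)) ∨
    (e = s(Q.v f, Q.x f) ∧ e' = s(Q.u f, Q.y f))

/-- The setoid on edges generated by the opposite-edge relation; its classes are
the train tracks. -/
def trackSetoid : Setoid {e : Sym2 V // e ∈ Q.edgeSet} :=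
  Relation.EqvGen.setoid (fun e e' => Q.Opp e.1 e'.1)

/-- The set of train tracks of the quadrangulation. -/
def Tracks : Type _ := Quotient Q.trackSetoid

/-- No train track is a loop: every train track reaches the boundary, i.e.
contains an edge adjacent to exactly one internal face. -/
def NoLoopTrack : Prop :=
  ∀ e : {e : Sym2 V // e ∈ Q.edgeSet}, ∃ e' : {e : Sym2 V // e ∈ Q.edgeSet},
    Q.trackSetoid.r e e' ∧ Q.faceCount e'.1 = 1

end QuadData

/-!
Consider the graph on the edges of the quadrangulation whose links are the `2|F|` pairs of
opposite sides of the faces. Its connected components are the train tracks, so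
`|E| ≤ |T| + 2|F|`. Conversely, a train track meets every face in an even number of sides, so
it carries an even number of edge–face incidences; since every edge lies on one or two faces
and every track contains a boundary edge, a track `t` carries at most `2|t| - 2` incidences,
and summing over the tracks gives `4|F| ≤ 2|E| - 2|T|`. Hence `|T| = |E| - 2|F|`, and Euler's
formula `|V| - |E| + |F| = 1` turns this into `|T| + 1 = |V| - |F|`.
-/

namespace SimpleGraph

variable {V : Type*} (G : SimpleGraph V)

/-- Sum `|C| ≤ |E(C)| + 1` over the connected components `C`. -/
lemma card_vert_le_card_edgeSet_add_card_connectedComponent [Finite V] :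
    Nat.card V ≤ Nat.card G.edgeSet + Nat.card G.ConnectedComponent := by
  have := Fintype.ofFinite V
  classical
  let toEdge : (Σ C : G.ConnectedComponent, C.toSimpleGraph.edgeSet) → G.edgeSet :=
    fun p => p.1.toSimpleGraph_hom.mapEdgeSet p.2
  have toEdge_injective : Function.Injective toEdge := by
    rintro ⟨C, ⟨⟨a, b⟩, hab⟩⟩ ⟨C', e'⟩ h
    dsimp only [toEdge] at h
    have ha : a.1 ∈ (C'.toSimpleGraph_hom.mapEdgeSet e').1 := by
      rw [← h]; exact Sym2.mem_map.2 ⟨a, Sym2.mem_mk_left a b, rfl⟩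
    obtain ⟨a', -, ha'⟩ := Sym2.mem_map.1 ha
    obtain rfl : C = C' := by
      rw [← (C.mem_supp_iff a.1).1 a.2, ← (C'.mem_supp_iff a.1).1 (ha' ▸ a'.2)]
    exact Sigma.ext rfl (heq_of_eq (Hom.mapEdgeSet.injective _ Subtype.val_injective h))
  calc Nat.card V = ∑ C : G.ConnectedComponent, Nat.card C.supp := by
        rw [← Nat.card_congr (Equiv.sigmaFiberEquiv G.connectedComponentMk), Nat.card_sigma]
        rfl
    _ ≤ ∑ C : G.ConnectedComponent, (Nat.card C.toSimpleGraph.edgeSet + 1) :=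
        Finset.sum_le_sum fun C _ => C.connected_toSimpleGraph.card_vert_le_card_edgeSet_add_one
    _ = Nat.card (Σ C : G.ConnectedComponent, C.toSimpleGraph.edgeSet)
          + Nat.card G.ConnectedComponent := by
        rw [Finset.sum_add_distrib, Nat.card_sigma]; simp
    _ ≤ Nat.card G.edgeSet + Nat.card G.ConnectedComponent := by
        gcongr; exact Nat.card_le_card_of_injective toEdge toEdge_injective

end SimpleGraph

namespace QuadData

variable {V F : Type*} (Q : QuadData V F) (f : F)

lemma x_ne_u : Q.x f ≠ Q.u f := ne_of_apply_ne Q.color <| by simp [Q.colx, Q.colu]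
lemma x_ne_v : Q.x f ≠ Q.v f := ne_of_apply_ne Q.color <| by simp [Q.colx, Q.colv]
lemma y_ne_u : Q.y f ≠ Q.u f := ne_of_apply_ne Q.color <| by simp [Q.coly, Q.colu]
lemma y_ne_v : Q.y f ≠ Q.v f := ne_of_apply_ne Q.color <| by simp [Q.coly, Q.colv]

section Sides

variable [DecidableEq V]

lemma disjoint_opposite_pairs :
    Disjoint ({s(Q.x f, Q.u f), s(Q.y f, Q.v f)} : Finset (Sym2 V))
      {s(Q.u f, Q.y f), s(Q.v f, Q.x f)} := by
  simp [Q.x_ne_u, Q.x_ne_v, Q.y_ne_u, Q.y_ne_v, (Q.x_ne_v f).symm, (Q.y_ne_u f).symm,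
    Q.xy f, (Q.xy f).symm, Q.uv f, (Q.uv f).symm]

lemma sides_eq_union : Q.sides f =
    {s(Q.x f, Q.u f), s(Q.y f, Q.v f)} ∪ {s(Q.u f, Q.y f), s(Q.v f, Q.x f)} := by
  ext e; simp only [sides, mem_insert, mem_singleton, mem_union]; tauto

lemma card_sides : #(Q.sides f) = 4 := by
  rw [sides_eq_union, card_union_of_disjoint (Q.disjoint_opposite_pairs f), card_pair, card_pair]
  all_goals simp [Q.x_ne_v, Q.y_ne_v, Q.xy f, Q.uv f]

end Sides

lemma Opp.symm {Q : QuadData V F} {e e' : Sym2 V} (h : Q.Opp e e') : Q.Opp e' e := by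
  obtain ⟨f, h⟩ := h; exact ⟨f, by tauto⟩

def oppositePair : F × Bool → Sym2 (Sym2 V)
  | (f, true) => s(s(Q.x f, Q.u f), s(Q.y f, Q.v f))
  | (f, false) => s(s(Q.u f, Q.y f), s(Q.v f, Q.x f))

lemma Opp.mk_mem_range_oppositePair {Q : QuadData V F} {e e' : Sym2 V} (h : Q.Opp e e') :
    s(e, e') ∈ Set.range Q.oppositePair := by
  obtain ⟨f, ⟨rfl, rfl⟩ | ⟨rfl, rfl⟩ | ⟨rfl, rfl⟩ | ⟨rfl, rfl⟩⟩ := h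
  · exact ⟨(f, true), rfl⟩
  · exact ⟨(f, true), Sym2.eq_swap⟩
  · exact ⟨(f, false), rfl⟩
  · exact ⟨(f, false), Sym2.eq_swap⟩

section FaceCount

variable [DecidableEq V] [Fintype F]

lemma sides_subset_edgeSet : Q.sides f ⊆ Q.edgeSet :=
  subset_biUnion_of_mem Q.sides (mem_univ f)

lemma Opp.mem_edgeSet {Q : QuadData V F} {e e' : Sym2 V} (h : Q.Opp e e') : e ∈ Q.edgeSet := by
  obtain ⟨f, h⟩ := h
  apply Q.sides_subset_edgeSet f
  rcases h with ⟨rfl, -⟩ | ⟨rfl, -⟩ | ⟨rfl, -⟩ | ⟨rfl, -⟩ <;> simp [sides]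

lemma sum_faceCount_eq_sum_card_inter (S : Finset (Sym2 V)) :
    ∑ e ∈ S, Q.faceCount e = ∑ f, #(S ∩ Q.sides f) := by
  simp_rw [← filter_mem_eq_inter]
  exact sum_card_bipartiteAbove_eq_sum_card_bipartiteBelow _

lemma sum_faceCount : ∑ e ∈ Q.edgeSet, Q.faceCount e = 4 * Fintype.card F := by
  rw [sum_faceCount_eq_sum_card_inter, sum_const_nat fun f _ => ?_, card_univ, mul_comm]
  rw [inter_eq_right.2 (Q.sides_subset_edgeSet f), card_sides]

/-- Such a set `S` meets every face in none, two or four of its sides. -/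
lemma even_sum_faceCount {S : Finset (Sym2 V)} (hS : ∀ e e', Q.Opp e e' → e ∈ S → e' ∈ S) :
    Even (∑ e ∈ S, Q.faceCount e) := by
  have even_card_inter_pair {e e' : Sym2 V} (hne : e ≠ e') (hopp : Q.Opp e e') :
      Even #(S ∩ {e, e'}) := by
    by_cases he : e ∈ S
    · rw [inter_eq_right.2 (by simp [insert_subset_iff, he, hS e e' hopp he]), card_pair hne]
      exact even_two
    · have he' : e' ∉ S := fun h => he (hS e' e hopp.symm h)
      simp [he, he']
  rw [sum_faceCount_eq_sum_card_inter]
  refine Finset.even_sum _ fun f _ => ?_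
  rw [sides_eq_union, inter_union_distrib_left, card_union_of_disjoint
    ((Q.disjoint_opposite_pairs f).mono inter_subset_right inter_subset_right)]
  exact (even_card_inter_pair (by simp [Q.x_ne_v, Q.xy f]) ⟨f, by tauto⟩).add
    (even_card_inter_pair (by simp [Q.uv f, Q.y_ne_v]) ⟨f, by tauto⟩)

end FaceCount

section Tracks

variable [DecidableEq V] [Fintype F]

instance : Finite Q.Tracks := Quotient.finite _

noncomputable instance : Fintype Q.Tracks := Fintype.ofFinite _

noncomputable instance : DecidableEq Q.Tracks := Classical.decEq _

def track (e : {e // e ∈ Q.edgeSet}) : Q.Tracks := Quotient.mk _ e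

lemma track_surjective : Function.Surjective Q.track := Quotient.mk_surjective

noncomputable def trackEdges (t : Q.Tracks) : Finset (Sym2 V) :=
  (univ.filter fun e => Q.track e = t).map (Function.Embedding.subtype _)

lemma mem_trackEdges {t : Q.Tracks} {e : Sym2 V} :
    e ∈ Q.trackEdges t ↔ ∃ he : e ∈ Q.edgeSet, Q.track ⟨e, he⟩ = t := by
  simp [trackEdges]

lemma sum_sum_trackEdges {M : Type*} [AddCommMonoid M] (g : Sym2 V → M) :
    ∑ t, ∑ e ∈ Q.trackEdges t, g e = ∑ e ∈ Q.edgeSet, g e := by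
  simp_rw [trackEdges, sum_map]
  rw [sum_fiberwise]
  exact sum_coe_sort Q.edgeSet g

lemma opp_mem_trackEdges {t : Q.Tracks} {e e' : Sym2 V} (h : Q.Opp e e')
    (he : e ∈ Q.trackEdges t) : e' ∈ Q.trackEdges t := by
  obtain ⟨he, rfl⟩ := Q.mem_trackEdges.1 he
  exact Q.mem_trackEdges.2 ⟨h.symm.mem_edgeSet, Quotient.sound (.symm _ _ (.rel _ _ h))⟩

/-- The connected components of this graph are the train tracks. -/
def trackGraph : SimpleGraph {e // e ∈ Q.edgeSet} :=
  SimpleGraph.fromRel fun e e' => Q.Opp e.1 e'.1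

lemma map_val_mem_range_oppositePair {e : Sym2 {e // e ∈ Q.edgeSet}}
    (he : e ∈ Q.trackGraph.edgeSet) : e.map Subtype.val ∈ Set.range Q.oppositePair := by
  induction e using Sym2.ind with
  | h a b =>
    rw [Sym2.map_mk]
    obtain ⟨-, h | h⟩ := he
    · exact h.mk_mem_range_oppositePair
    · rw [Sym2.eq_swap]; exact h.mk_mem_range_oppositePair

lemma card_edgeSet_trackGraph_le : Nat.card Q.trackGraph.edgeSet ≤ 2 * Fintype.card F :=
  calc Nat.card Q.trackGraph.edgeSet ≤ Nat.card (Set.range Q.oppositePair) :=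
        Nat.card_le_card_of_injective
          (fun e => ⟨e.1.map Subtype.val, Q.map_val_mem_range_oppositePair e.2⟩)
          fun e e' h => Subtype.ext (Sym2.map.injective Subtype.val_injective
            (congrArg Subtype.val h))
    _ ≤ Nat.card (F × Bool) := Finite.card_range_le _
    _ = 2 * Fintype.card F := by simp [mul_comm]

lemma card_connectedComponent_trackGraph_le :
    Nat.card Q.trackGraph.ConnectedComponent ≤ Nat.card Q.Tracks := by
  have reachable_of_opp {e e' : {e // e ∈ Q.edgeSet}} (h : Q.Opp e.1 e'.1) :
      Q.trackGraph.Reachable e e' := by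
    by_cases hee' : e = e'
    · exact hee' ▸ .refl e
    · exact SimpleGraph.Adj.reachable (SimpleGraph.fromRel_adj _ _ _ |>.2 ⟨hee', .inl h⟩)
  refine Nat.card_le_card_of_surjective
    (Quotient.lift Q.trackGraph.connectedComponentMk fun e e' h => ?_) ?_
  · exact SimpleGraph.ConnectedComponent.sound <|
      Q.trackGraph.reachable_is_equivalence.eqvGen_iff.1 (h.mono fun _ _ => reachable_of_opp)
  · exact SimpleGraph.ConnectedComponent.ind fun e => ⟨Q.track e, rfl⟩

lemma card_edgeSet_le_card_tracks_add : #Q.edgeSet ≤ Nat.card Q.Tracks + 2 * Fintype.card F :=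
  calc #Q.edgeSet = Nat.card {e // e ∈ Q.edgeSet} := (Nat.card_eq_finsetCard _).symm
    _ ≤ Nat.card Q.trackGraph.edgeSet + Nat.card Q.trackGraph.ConnectedComponent :=
        Q.trackGraph.card_vert_le_card_edgeSet_add_card_connectedComponent
    _ ≤ Nat.card Q.Tracks + 2 * Fintype.card F := by
        linarith [Q.card_edgeSet_trackGraph_le, Q.card_connectedComponent_trackGraph_le]

/-- Every edge has one or two faces, a boundary edge exactly one, and by parity a track with a
boundary edge has a second one. -/
lemma sum_faceCount_trackEdges_add_two_le (hle : ∀ e ∈ Q.edgeSet, Q.faceCount e ≤ 2)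
    (hNL : Q.NoLoopTrack) (t : Q.Tracks) :
    ∑ e ∈ Q.trackEdges t, Q.faceCount e + 2 ≤ 2 * #(Q.trackEdges t) := by
  have hlt : ∑ e ∈ Q.trackEdges t, Q.faceCount e < ∑ e ∈ Q.trackEdges t, 2 := by
    obtain ⟨e, rfl⟩ := Q.track_surjective t
    obtain ⟨b, hb, hb1⟩ := hNL e
    refine sum_lt_sum (fun e he => hle e (Q.mem_trackEdges.1 he).1)
      ⟨b.1, Q.mem_trackEdges.2 ⟨b.2, (Quotient.sound hb).symm⟩, by omega⟩
  obtain ⟨k, hk⟩ := Q.even_sum_faceCount (S := Q.trackEdges t) fun _ _ => Q.opp_mem_trackEdges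
  rw [sum_const, smul_eq_mul] at hlt
  omega

lemma two_mul_card_tracks_add_le (hle : ∀ e ∈ Q.edgeSet, Q.faceCount e ≤ 2)
    (hNL : Q.NoLoopTrack) : 2 * Nat.card Q.Tracks + 4 * Fintype.card F ≤ 2 * #Q.edgeSet := by
  have hsum := sum_le_sum fun t (_ : t ∈ univ) => Q.sum_faceCount_trackEdges_add_two_le hle hNL t
  rw [sum_add_distrib, ← mul_sum, sum_sum_trackEdges, sum_faceCount, sum_const, card_univ,
    smul_eq_mul, ← Nat.card_eq_fintype_card (α := Q.Tracks)] at hsum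
  have hcard := Q.sum_sum_trackEdges fun _ => 1
  simp only [sum_const, smul_eq_mul, mul_one] at hcard
  omega

end Tracks

end QuadData

theorem track_count_general {V F : Type*} [Fintype V] [DecidableEq V] [Fintype F]
    (Q : QuadData V F) (hP : Q.IsProper) (hNL : Q.NoLoopTrack) :
    (Nat.card Q.Tracks : ℤ) + 1 = (Fintype.card V : ℤ) - (Fintype.card F : ℤ) := by
  have hupper := Q.two_mul_card_tracks_add_le hP.edge_le_two hNL
  have hlower := Q.card_edgeSet_le_card_tracks_add
  linarith [hP.euler]

/-- For a connected finite planar quadrangulation with boundary none of whose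
train tracks is a loop, the number of train tracks satisfies |T| + 1 = |V| - |F|. -/
theorem track_count {V F : Type*} [Fintype V] [DecidableEq V] [Fintype F] [DecidableEq F]
    (Q : QuadData V F) (hP : Q.IsProper) (hNL : Q.NoLoopTrack) :
    (Nat.card Q.Tracks : ℤ) + 1 = (Fintype.card V : ℤ) - (Fintype.card F : ℤ) :=
  track_count_general Q hP hNL
end

section
/- Let G be a connected finite planar quadrangulation with boundary whose train tracks never form loops, and let (w^f_i)_{i=1..5} be positive weights on each internal face f satisfying the free-fermionic relations w1w4 = w3w5, w2w3 = w4w5, w5(w1+w2) = w3w4 at every face. Then there exist positive reals (g_x)_{x∈V} and positive constants (c_f)_{f∈F} such that at every face f with black vertices x, y and white vertices u, v: c_f·w^f_1 = g_x g_y, c_f·w^f_2 = g_u g_v, c_f·w^f_3 = √(g_x g_y)·√(g_x g_y + g_u g_v), c_f·w^f_4 = √(g_u g_v)·√(g_x g_y + g_u g_v), c_f·w^f_5 = √(g_x g_y g_u g_v). -/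
open Finset

open Matrix

set_option linter.unusedSectionVars false
set_option maxHeartbeats 1000000

namespace KashaevAux

open QuadData

variable {V F : Type*} [Fintype V] [DecidableEq V] [Fintype F] [DecidableEq F]
variable (Q : QuadData V F)

-- distinctness of the four sides
lemma bw {a b : V} (ha : Q.color a = true) (hb : Q.color b = false) : a ≠ b := by
  intro h; rw [h, hb] at ha; exact Bool.noConfusion ha

lemma xu_ne_uy (f : F) : s(Q.x f, Q.u f) ≠ s(Q.u f, Q.y f) := by
  intro h; rw [Sym2.eq_iff] at h
  rcases h with ⟨h1, h2⟩ | ⟨h1, h2⟩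
  · exact bw Q (Q.colx f) (Q.colu f) h1
  · exact Q.xy f h1

lemma xu_ne_yv (f : F) : s(Q.x f, Q.u f) ≠ s(Q.y f, Q.v f) := by
  intro h; rw [Sym2.eq_iff] at h
  rcases h with ⟨h1, h2⟩ | ⟨h1, h2⟩
  · exact Q.xy f h1
  · exact bw Q (Q.colx f) (Q.colv f) h1

lemma xu_ne_vx (f : F) : s(Q.x f, Q.u f) ≠ s(Q.v f, Q.x f) := by
  intro h; rw [Sym2.eq_iff] at h
  rcases h with ⟨h1, h2⟩ | ⟨h1, h2⟩
  · exact bw Q (Q.colx f) (Q.colv f) h1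
  · exact Q.uv f h2

lemma uy_ne_yv (f : F) : s(Q.u f, Q.y f) ≠ s(Q.y f, Q.v f) := by
  intro h; rw [Sym2.eq_iff] at h
  rcases h with ⟨h1, h2⟩ | ⟨h1, h2⟩
  · exact bw Q (Q.coly f) (Q.colu f) h1.symm
  · exact Q.uv f h1

lemma uy_ne_vx (f : F) : s(Q.u f, Q.y f) ≠ s(Q.v f, Q.x f) := by
  intro h; rw [Sym2.eq_iff] at h
  rcases h with ⟨h1, h2⟩ | ⟨h1, h2⟩
  · exact Q.uv f h1
  · exact bw Q (Q.colx f) (Q.colu f) h1.symm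

lemma yv_ne_vx (f : F) : s(Q.y f, Q.v f) ≠ s(Q.v f, Q.x f) := by
  intro h; rw [Sym2.eq_iff] at h
  rcases h with ⟨h1, h2⟩ | ⟨h1, h2⟩
  · exact bw Q (Q.coly f) (Q.colv f) h1
  · exact Q.xy f h1.symm

/-- generic sum over the four sides of a face -/
lemma sum_sides (f : F) (g : Sym2 V → ℝ) :
    ∑ e ∈ Q.sides f, g e =
      g s(Q.x f, Q.u f) + g s(Q.u f, Q.y f) + g s(Q.y f, Q.v f) + g s(Q.v f, Q.x f) := by
  rw [QuadData.sides]
  rw [Finset.sum_insert (by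
    simp only [Finset.mem_insert, Finset.mem_singleton, not_or]
    exact ⟨xu_ne_uy Q f, xu_ne_yv Q f, xu_ne_vx Q f⟩)]
  rw [Finset.sum_insert (by
    simp only [Finset.mem_insert, Finset.mem_singleton, not_or]
    exact ⟨uy_ne_yv Q f, uy_ne_vx Q f⟩)]
  rw [Finset.sum_insert (by
    simp only [Finset.mem_singleton]
    exact yv_ne_vx Q f)]
  rw [Finset.sum_singleton]; ring

lemma mem_sides_iff {e : Sym2 V} {f : F} :
    e ∈ Q.sides f ↔ e = s(Q.x f, Q.u f) ∨ e = s(Q.u f, Q.y f) ∨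
      e = s(Q.y f, Q.v f) ∨ e = s(Q.v f, Q.x f) := by
  simp [QuadData.sides]

lemma sides_subset_edgeSet (f : F) : Q.sides f ⊆ Q.edgeSet := by
  intro e he; exact Finset.mem_biUnion.mpr ⟨f, Finset.mem_univ f, he⟩

lemma exists_face_of_mem_edgeSet {e : Sym2 V} (he : e ∈ Q.edgeSet) : ∃ f, e ∈ Q.sides f := by
  rcases Finset.mem_biUnion.mp he with ⟨f, _, hf⟩; exact ⟨f, hf⟩

/-- Sign of a side within a face: `+1` on the pair `{xu, yv}`, `-1` on `{uy, vx}`. -/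
noncomputable def sgn (f : F) (e : Sym2 V) : ℝ :=
  if e = s(Q.x f, Q.u f) ∨ e = s(Q.y f, Q.v f) then 1 else -1

lemma sgn_xu (f : F) : sgn Q f s(Q.x f, Q.u f) = 1 := by rw [sgn, if_pos (Or.inl rfl)]
lemma sgn_yv (f : F) : sgn Q f s(Q.y f, Q.v f) = 1 := by rw [sgn, if_pos (Or.inr rfl)]
lemma sgn_uy (f : F) : sgn Q f s(Q.u f, Q.y f) = -1 := by
  rw [sgn, if_neg]; rintro (h | h)
  · exact xu_ne_uy Q f h.symm
  · exact uy_ne_yv Q f h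
lemma sgn_vx (f : F) : sgn Q f s(Q.v f, Q.x f) = -1 := by
  rw [sgn, if_neg]; rintro (h | h)
  · exact xu_ne_vx Q f h.symm
  · exact yv_ne_vx Q f h.symm

lemma sgn_sq (f : F) (e : Sym2 V) : sgn Q f e ^ 2 = 1 := by
  rw [sgn]; split_ifs <;> ring

section Propagation

variable (α γ : F → ℝ)

/-- The "passage value" of a face at one of its sides. -/
noncomputable def pval (f : F) (e : Sym2 V) : ℝ := γ f - sgn Q f e * α f

variable {Q α γ}
variable (H : ∀ e ∈ Q.edgeSet,
    ∑ f ∈ Finset.univ.filter (fun f => e ∈ Q.sides f), α f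
      = ∑ f ∈ Finset.univ.filter (fun f => e ∈ Q.sides f), γ f * sgn Q f e)

include H

/-- boundary edge: the passage value vanishes -/
lemma pval_boundary {e : Sym2 V} {f : F} (hef : e ∈ Q.sides f)
    (h1 : Q.faceCount e = 1) : pval Q α γ f e = 0 := by
  have he : e ∈ Q.edgeSet := sides_subset_edgeSet Q f hef
  obtain ⟨a, ha⟩ := Finset.card_eq_one.mp h1
  have hfa : f = a := by
    have : f ∈ Finset.univ.filter (fun f => e ∈ Q.sides f) :=
      Finset.mem_filter.mpr ⟨Finset.mem_univ f, hef⟩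
    rw [ha] at this; exact Finset.mem_singleton.mp this
  have heq := H e he
  rw [ha, Finset.sum_singleton, Finset.sum_singleton, ← hfa] at heq
  have hs := sgn_sq Q f e
  rw [pval]; linear_combination - sgn Q f e * heq - γ f * hs

/-- two faces at a common edge have passage values equal up to sign -/
lemma pval_sq_eq {e : Sym2 V} {f g : F} (hP : Q.IsProper)
    (hef : e ∈ Q.sides f) (heg : e ∈ Q.sides g) :
    pval Q α γ f e ^ 2 = pval Q α γ g e ^ 2 := by
  rcases eq_or_ne f g with rfl | hne
  · rfl
  have he : e ∈ Q.edgeSet := sides_subset_edgeSet Q f hef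
  have hsub : ({f, g} : Finset F) ⊆ Finset.univ.filter (fun f => e ∈ Q.sides f) := by
    intro a ha
    rcases Finset.mem_insert.mp ha with rfl | ha
    · exact Finset.mem_filter.mpr ⟨Finset.mem_univ _, hef⟩
    · rw [Finset.mem_singleton.mp ha]
      exact Finset.mem_filter.mpr ⟨Finset.mem_univ _, heg⟩
  have hcard : (Finset.univ.filter (fun f => e ∈ Q.sides f)).card ≤ ({f, g} : Finset F).card := by
    rw [Finset.card_pair hne]; exact hP.edge_le_two e he
  have hset : Finset.univ.filter (fun f => e ∈ Q.sides f) = {f, g} :=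
    (Finset.eq_of_subset_of_card_le hsub hcard).symm
  have heq := H e he
  rw [hset, Finset.sum_pair hne, Finset.sum_pair hne] at heq
  have hs := sgn_sq Q f e
  have ht := sgn_sq Q g e
  have key : sgn Q f e * pval Q α γ f e + sgn Q g e * pval Q α γ g e = 0 := by
    rw [pval, pval]; linear_combination -heq - α f * hs - α g * ht
  have h2 : (sgn Q f e * pval Q α γ f e) ^ 2 = (sgn Q g e * pval Q α γ g e) ^ 2 := by
    rw [eq_neg_of_add_eq_zero_left key]; ring
  linear_combination h2 - pval Q α γ f e ^ 2 * hs + pval Q α γ g e ^ 2 * ht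

omit H in
lemma opp_mem_and_sgn {e e' : Sym2 V} {f0 : F} (h : (e = s(Q.x f0, Q.u f0) ∧ e' = s(Q.y f0, Q.v f0)) ∨
    (e = s(Q.y f0, Q.v f0) ∧ e' = s(Q.x f0, Q.u f0)) ∨
    (e = s(Q.u f0, Q.y f0) ∧ e' = s(Q.v f0, Q.x f0)) ∨
    (e = s(Q.v f0, Q.x f0) ∧ e' = s(Q.u f0, Q.y f0))) :
    e ∈ Q.sides f0 ∧ e' ∈ Q.sides f0 ∧ sgn Q f0 e = sgn Q f0 e' := by
  rcases h with ⟨rfl, rfl⟩ | ⟨rfl, rfl⟩ | ⟨rfl, rfl⟩ | ⟨rfl, rfl⟩ <;>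
    refine ⟨mem_sides_iff Q |>.mpr (by tauto), mem_sides_iff Q |>.mpr (by tauto), ?_⟩
  · rw [sgn_xu, sgn_yv]
  · rw [sgn_xu, sgn_yv]
  · rw [sgn_uy, sgn_vx]
  · rw [sgn_uy, sgn_vx]

lemma pval_sq_track (hP : Q.IsProper) :
    ∀ a b : {e : Sym2 V // e ∈ Q.edgeSet},
      Relation.EqvGen (fun e e' => Q.Opp e.1 e'.1) a b →
      ∀ f g, a.1 ∈ Q.sides f → b.1 ∈ Q.sides g →
        pval Q α γ f a.1 ^ 2 = pval Q α γ g b.1 ^ 2 := by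
  intro a b hab
  induction hab with
  | rel e e' h =>
    intro f g hf hg
    obtain ⟨f0, h0⟩ := h
    obtain ⟨h1, h2, h3⟩ := opp_mem_and_sgn h0
    calc pval Q α γ f e.1 ^ 2 = pval Q α γ f0 e.1 ^ 2 := pval_sq_eq H hP hf h1
      _ = pval Q α γ f0 e'.1 ^ 2 := by rw [pval, pval, h3]
      _ = pval Q α γ g e'.1 ^ 2 := pval_sq_eq H hP h2 hg
  | refl e =>
    intro f g hf hg
    exact pval_sq_eq H hP hf hg
  | symm e e' _ ih =>
    intro f g hf hg
    exact (ih g f hg hf).symm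
  | trans e e' e'' _ _ ih1 ih2 =>
    intro f g hf hg
    obtain ⟨fm, hfm⟩ := exists_face_of_mem_edgeSet Q e'.2
    exact (ih1 f fm hf hfm).trans (ih2 fm g hfm hg)

/-- Main propagation lemma: if the unsigned face sums agree with signed face sums
at every edge, then both coefficient families vanish. -/
lemma propagation (hP : Q.IsProper) (hNL : Q.NoLoopTrack) (f : F) : α f = 0 ∧ γ f = 0 := by
  have key : ∀ e ∈ Q.sides f, pval Q α γ f e = 0 := by
    intro e he
    have heE : e ∈ Q.edgeSet := sides_subset_edgeSet Q f he
    obtain ⟨e', hr, hfc⟩ := hNL ⟨e, heE⟩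
    obtain ⟨f', hf'⟩ := exists_face_of_mem_edgeSet Q e'.2
    have h0 : pval Q α γ f' e'.1 = 0 := pval_boundary H hf' hfc
    have h1 : pval Q α γ f e ^ 2 = pval Q α γ f' e'.1 ^ 2 :=
      pval_sq_track H hP ⟨e, heE⟩ e' hr f f' he hf'
    rw [h0] at h1
    exact pow_eq_zero_iff (n := 2) (by norm_num) |>.mp (by linarith [h1])
  have k1 := key s(Q.x f, Q.u f) (mem_sides_iff Q |>.mpr (by tauto))
  have k2 := key s(Q.u f, Q.y f) (mem_sides_iff Q |>.mpr (by tauto))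
  rw [pval, sgn_xu] at k1
  rw [pval, sgn_uy] at k2
  constructor <;> linarith

end Propagation

section LinAlg

/-- Edge subtype. -/
abbrev ES := {e : Sym2 V // e ∈ Q.edgeSet}

/-- Unsigned vertex-edge incidence matrix. -/
noncomputable def NMat : Matrix V (ES Q) ℝ := fun z e => if z ∈ e.1 then 1 else 0

/-- Signed vertex-face incidence matrix. -/
noncomputable def AMat : Matrix F V ℝ := fun f z =>
  (if z = Q.x f then 1 else 0) + (if z = Q.y f then 1 else 0)
    - (if z = Q.u f then 1 else 0) - (if z = Q.v f then 1 else 0)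

/-- The signed cycle vector of a face. -/
noncomputable def cvec (f : F) : ES Q → ℝ := fun e => if e.1 ∈ Q.sides f then sgn Q f e.1 else 0

lemma count_sides (f : F) (z : V) :
    ∑ e ∈ Q.sides f, (if z ∈ e then (1:ℝ) else 0)
      = 2 * ((if z = Q.x f then (1:ℝ) else 0) + (if z = Q.y f then 1 else 0)
        + (if z = Q.u f then 1 else 0) + (if z = Q.v f then 1 else 0)) := by
  rw [sum_sides]
  simp only [Sym2.mem_iff]
  have nxy : Q.x f ≠ Q.y f := Q.xy f
  have nyx : Q.y f ≠ Q.x f := (Q.xy f).symm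
  have nuv : Q.u f ≠ Q.v f := Q.uv f
  have nvu : Q.v f ≠ Q.u f := (Q.uv f).symm
  have nxu : Q.x f ≠ Q.u f := bw Q (Q.colx f) (Q.colu f)
  have nux : Q.u f ≠ Q.x f := nxu.symm
  have nxv : Q.x f ≠ Q.v f := bw Q (Q.colx f) (Q.colv f)
  have nvx : Q.v f ≠ Q.x f := nxv.symm
  have nyu : Q.y f ≠ Q.u f := bw Q (Q.coly f) (Q.colu f)
  have nuy : Q.u f ≠ Q.y f := nyu.symm
  have nyv : Q.y f ≠ Q.v f := bw Q (Q.coly f) (Q.colv f)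
  have nvy : Q.v f ≠ Q.y f := nyv.symm
  by_cases hx : z = Q.x f <;> by_cases hy : z = Q.y f <;>
    by_cases hu : z = Q.u f <;> by_cases hv : z = Q.v f <;>
  first
    | (exact absurd (hx.symm.trans hy) nxy)
    | (exact absurd (hx.symm.trans hu) nxu)
    | (exact absurd (hx.symm.trans hv) nxv)
    | (exact absurd (hy.symm.trans hu) nyu)
    | (exact absurd (hy.symm.trans hv) nyv)
    | (exact absurd (hu.symm.trans hv) nuv)
    | (simp [hx, hy, hu, hv, nxy, nyx, nuv, nvu, nxu, nux, nxv, nvx, nyu, nuy, nyv, nvy];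
       try ring)

lemma sum_sides_sgn (f : F) (z : V) :
    ∑ e ∈ Q.sides f, (if z ∈ e then sgn Q f e else 0) = 0 := by
  rw [sum_sides]
  simp only [Sym2.mem_iff, sgn_xu, sgn_uy, sgn_yv, sgn_vx]
  have nxy : Q.x f ≠ Q.y f := Q.xy f
  have nyx : Q.y f ≠ Q.x f := (Q.xy f).symm
  have nuv : Q.u f ≠ Q.v f := Q.uv f
  have nvu : Q.v f ≠ Q.u f := (Q.uv f).symm
  have nxu : Q.x f ≠ Q.u f := bw Q (Q.colx f) (Q.colu f)
  have nux : Q.u f ≠ Q.x f := nxu.symm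
  have nxv : Q.x f ≠ Q.v f := bw Q (Q.colx f) (Q.colv f)
  have nvx : Q.v f ≠ Q.x f := nxv.symm
  have nyu : Q.y f ≠ Q.u f := bw Q (Q.coly f) (Q.colu f)
  have nuy : Q.u f ≠ Q.y f := nyu.symm
  have nyv : Q.y f ≠ Q.v f := bw Q (Q.coly f) (Q.colv f)
  have nvy : Q.v f ≠ Q.y f := nyv.symm
  by_cases hx : z = Q.x f <;> by_cases hy : z = Q.y f <;>
    by_cases hu : z = Q.u f <;> by_cases hv : z = Q.v f <;>
  first
    | (exact absurd (hx.symm.trans hy) nxy)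
    | (exact absurd (hx.symm.trans hu) nxu)
    | (exact absurd (hx.symm.trans hv) nxv)
    | (exact absurd (hy.symm.trans hu) nyu)
    | (exact absurd (hy.symm.trans hv) nyv)
    | (exact absurd (hu.symm.trans hv) nuv)
    | (simp [hx, hy, hu, hv, nxy, nyx, nuv, nvu, nxu, nux, nxv, nvx, nyu, nuy, nyv, nvy];
       try ring)

lemma exists_endpoints {e : Sym2 V} (he : e ∈ Q.edgeSet) :
    ∃ a b, e = s(a, b) ∧ Q.color a = true ∧ Q.color b = false := by
  obtain ⟨f, hf⟩ := exists_face_of_mem_edgeSet Q he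
  rcases (mem_sides_iff Q).mp hf with rfl | rfl | rfl | rfl
  · exact ⟨Q.x f, Q.u f, rfl, Q.colx f, Q.colu f⟩
  · exact ⟨Q.y f, Q.u f, Sym2.eq_swap.symm, Q.coly f, Q.colu f⟩
  · exact ⟨Q.y f, Q.v f, rfl, Q.coly f, Q.colv f⟩
  · exact ⟨Q.x f, Q.v f, Sym2.eq_swap.symm, Q.colx f, Q.colv f⟩

/-- Application of the transposed incidence matrix: sum of values at endpoints. -/
lemma NT_apply (h : V → ℝ) {a b : V} (hab : a ≠ b) (e : ES Q) (heq : e.1 = s(a, b)) :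
    (NMat Q)ᵀ.mulVec h e = h a + h b := by
  rw [Matrix.mulVec]
  show (∑ z, (NMat Q) z e * h z) = h a + h b
  have : ∀ z, NMat Q z e * h z
      = (if z = a then h z else 0) + (if z = b then h z else 0) := by
    intro z
    rw [NMat, heq]; simp only [Sym2.mem_iff]
    by_cases hza : z = a <;> by_cases hzb : z = b <;>
      simp [hza, hzb, hab, hab.symm]
  rw [Finset.sum_congr rfl fun z _ => this z, Finset.sum_add_distrib,
    Finset.sum_ite_eq' Finset.univ a h, Finset.sum_ite_eq' Finset.univ b h]
  simp

/-- Application of the face matrix: the alternating sum over the corners. -/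
lemma AMat_mulVec (h : V → ℝ) (f : F) :
    (AMat Q).mulVec h f = h (Q.x f) + h (Q.y f) - h (Q.u f) - h (Q.v f) := by
  rw [Matrix.mulVec]
  show (∑ z, AMat Q f z * h z) = _
  have : ∀ z, AMat Q f z * h z
      = ((if z = Q.x f then h z else 0) + (if z = Q.y f then h z else 0))
        - ((if z = Q.u f then h z else 0) + (if z = Q.v f then h z else 0)) := by
    intro z
    rw [AMat]
    split_ifs <;> ring
  rw [Finset.sum_congr rfl fun z _ => this z, Finset.sum_sub_distrib,
    Finset.sum_add_distrib, Finset.sum_add_distrib,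
    Finset.sum_ite_eq' Finset.univ (Q.x f) h, Finset.sum_ite_eq' Finset.univ (Q.y f) h,
    Finset.sum_ite_eq' Finset.univ (Q.u f) h, Finset.sum_ite_eq' Finset.univ (Q.v f) h]
  simp; ring

lemma AT_mulVec (α : F → ℝ) (z : V) :
    (AMat Q)ᵀ.mulVec α z = ∑ f, AMat Q f z * α f := by
  rw [Matrix.mulVec]
  show (∑ f, AMat Q f z * α f) = _
  rfl

/-- The signed constant by color. -/
noncomputable def sigvec : V → ℝ := fun z => if Q.color z then 1 else -1

lemma adj_step (h : V → ℝ) (hh : (NMat Q)ᵀ.mulVec h = 0) {a c : V}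
    (hadj : Q.graph.Adj a c) : sigvec Q a * h a = sigvec Q c * h c := by
  rw [QuadData.graph, SimpleGraph.fromRel_adj] at hadj
  obtain ⟨hne, hor⟩ := hadj
  have he : s(a, c) ∈ Q.edgeSet := by
    rcases hor with h1 | h1
    · exact h1
    · rwa [Sym2.eq_swap]
  obtain ⟨p, q, hpq, hp, hq⟩ := exists_endpoints Q he
  have hpq' : p ≠ q := bw Q hp hq
  have hsum : h p + h q = 0 := by
    have := congrFun hh ⟨s(a, c), he⟩
    rwa [NT_apply Q h hpq' ⟨s(a, c), he⟩ hpq, Pi.zero_apply] at this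
  rcases Sym2.eq_iff.mp hpq with ⟨rfl, rfl⟩ | ⟨rfl, rfl⟩
  · simp only [sigvec, hp, hq]; norm_num; linarith
  · simp only [sigvec, hp, hq]; norm_num; linarith

lemma walk_const (h : V → ℝ) (hh : (NMat Q)ᵀ.mulVec h = 0) :
    ∀ {a b : V}, Q.graph.Walk a b → sigvec Q a * h a = sigvec Q b * h b := by
  intro a b w
  induction w with
  | nil => rfl
  | cons hadj _ ih => exact (adj_step Q h hh hadj).trans ih

lemma sigvec_mem_ker : (NMat Q)ᵀ.mulVec (sigvec Q) = 0 := by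
  funext e
  obtain ⟨p, q, hpq, hp, hq⟩ := exists_endpoints Q e.2
  have hpq' : p ≠ q := bw Q hp hq
  rw [NT_apply Q (sigvec Q) hpq' e hpq, Pi.zero_apply]
  simp [sigvec, hp, hq]

lemma ker_NT_eq (hconn : Q.graph.Connected) :
    LinearMap.ker (NMat Q)ᵀ.mulVecLin = Submodule.span ℝ {sigvec Q} := by
  apply le_antisymm
  · intro h hmem
    rw [LinearMap.mem_ker, Matrix.mulVecLin_apply] at hmem
    have hne : Nonempty V := hconn.nonempty
    obtain ⟨z0⟩ := hne
    have key : ∀ z, h z = (sigvec Q z0 * h z0) * sigvec Q z := by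
      intro z
      obtain ⟨w⟩ := hconn.preconnected z0 z
      have h1 := walk_const Q h hmem w
      have h2 : sigvec Q z ^ 2 = 1 := by rw [sigvec]; split_ifs <;> ring
      linear_combination (-(sigvec Q z)) * h1 - h z * h2
    have : h = (sigvec Q z0 * h z0) • sigvec Q := by
      funext z; rw [key z]; rfl
    rw [this]
    exact Submodule.smul_mem _ _ (Submodule.mem_span_singleton_self _)
  · rw [Submodule.span_le, Set.singleton_subset_iff]
    rw [SetLike.mem_coe, LinearMap.mem_ker, Matrix.mulVecLin_apply]
    exact sigvec_mem_ker Q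

lemma finrank_ker_NT (hconn : Q.graph.Connected) :
    Module.finrank ℝ (LinearMap.ker (NMat Q)ᵀ.mulVecLin) = 1 := by
  rw [ker_NT_eq Q hconn]
  apply finrank_span_singleton
  intro h0
  have hne : Nonempty V := hconn.nonempty
  obtain ⟨z0⟩ := hne
  have := congrFun h0 z0
  rw [sigvec, Pi.zero_apply] at this
  split_ifs at this <;> norm_num at this

/-- rank computation for the incidence matrix -/
lemma rank_NMat (hconn : Q.graph.Connected) :
    (NMat Q).rank + 1 = Fintype.card V := by
  rw [← Matrix.rank_transpose (NMat Q)]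
  have h1 : (NMat Q)ᵀ.rank
      = Module.finrank ℝ (LinearMap.range (NMat Q)ᵀ.mulVecLin) := rfl
  rw [h1, ← finrank_ker_NT Q hconn]
  rw [LinearMap.finrank_range_add_finrank_ker (NMat Q)ᵀ.mulVecLin]
  simp [Module.finrank_pi]

lemma finrank_ker_NMat (hP : Q.IsProper) :
    Module.finrank ℝ (LinearMap.ker (NMat Q).mulVecLin) = Fintype.card F := by
  have h1 := LinearMap.finrank_range_add_finrank_ker (NMat Q).mulVecLin
  have h2 : Module.finrank ℝ (ES Q → ℝ) = Q.edgeSet.card := by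
    rw [Module.finrank_pi]; exact Fintype.card_coe _
  rw [h2] at h1
  have h3 := rank_NMat Q hP.connected
  have h4 : (NMat Q).rank
      = Module.finrank ℝ (LinearMap.range (NMat Q).mulVecLin) := rfl
  rw [h4] at h3
  have h5 := hP.euler
  omega
lemma sum_edge_subtype (g : Sym2 V → ℝ) (f : F) :
    ∑ e : ES Q, (if e.1 ∈ Q.sides f then g e.1 else 0) = ∑ e ∈ Q.sides f, g e := by
  rw [← Finset.sum_subtype Q.edgeSet (fun x => Iff.rfl)
    (fun e => if e ∈ Q.sides f then g e else 0)]
  rw [Finset.sum_ite_mem, Finset.inter_eq_right.mpr (sides_subset_edgeSet Q f)]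

lemma cvec_mem_ker (f : F) : (NMat Q).mulVec (cvec Q f) = 0 := by
  funext z
  rw [Matrix.mulVec, Pi.zero_apply]
  show (∑ e : ES Q, NMat Q z e * cvec Q f e) = 0
  have step : ∀ e : ES Q, NMat Q z e * cvec Q f e
      = (if e.1 ∈ Q.sides f then (if z ∈ e.1 then sgn Q f e.1 else 0) else 0) := by
    intro e
    rw [NMat, cvec]
    split_ifs <;> ring
  rw [Finset.sum_congr rfl fun e _ => step e,
    sum_edge_subtype Q (fun e' => if z ∈ e' then sgn Q f e' else 0) f, sum_sides_sgn Q f z]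

lemma ind_eq_sig (f : F) (z : V) :
    (if z = Q.x f then (1:ℝ) else 0) + (if z = Q.y f then 1 else 0)
      + (if z = Q.u f then 1 else 0) + (if z = Q.v f then 1 else 0)
      = sigvec Q z * AMat Q f z := by
  rw [AMat, sigvec]
  cases hcol : Q.color z with
  | true =>
    have hu0 : z ≠ Q.u f := fun h => by rw [h, Q.colu f] at hcol; exact Bool.noConfusion hcol
    have hv0 : z ≠ Q.v f := fun h => by rw [h, Q.colv f] at hcol; exact Bool.noConfusion hcol
    rw [if_neg hu0, if_neg hv0]
    split_ifs <;> simp_all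
  | false =>
    have hx0 : z ≠ Q.x f := fun h => by rw [h, Q.colx f] at hcol; exact Bool.noConfusion hcol
    have hy0 : z ≠ Q.y f := fun h => by rw [h, Q.coly f] at hcol; exact Bool.noConfusion hcol
    rw [if_neg hx0, if_neg hy0]
    split_ifs <;> simp_all

/-- The coefficient extraction: if a combination of the `cvec` equals a given
unsigned combination at every edge, in the `filter` form needed by `propagation`. -/
lemma combination_to_H {α γ : F → ℝ}
    (h : ∀ e : ES Q, ∑ f, γ f * cvec Q f e
      = ∑ f ∈ Finset.univ.filter (fun f => e.1 ∈ Q.sides f), α f) :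
    ∀ e ∈ Q.edgeSet,
      ∑ f ∈ Finset.univ.filter (fun f => e ∈ Q.sides f), α f
        = ∑ f ∈ Finset.univ.filter (fun f => e ∈ Q.sides f), γ f * sgn Q f e := by
  intro e he
  have h1 := h ⟨e, he⟩
  rw [← h1]
  rw [Finset.sum_filter]
  apply Finset.sum_congr rfl
  intro f _
  rw [cvec]
  split_ifs <;> ring

lemma cvec_indep (hP : Q.IsProper) (hNL : Q.NoLoopTrack) : LinearIndependent ℝ (cvec Q) := by
  rw [Fintype.linearIndependent_iff]
  intro g hg f
  have h : ∀ e : ES Q, ∑ f', g f' * cvec Q f' e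
      = ∑ f' ∈ Finset.univ.filter (fun f' => e.1 ∈ Q.sides f'), (fun _ => (0:ℝ)) f' := by
    intro e
    have h1 := congrFun hg e
    rw [Finset.sum_apply] at h1
    simp only [Pi.smul_apply, smul_eq_mul, Pi.zero_apply] at h1
    rw [h1, Finset.sum_const_zero]
  exact (propagation (combination_to_H Q h) hP hNL f).2

lemma span_cvec_eq (hP : Q.IsProper) (hNL : Q.NoLoopTrack) :
    Submodule.span ℝ (Set.range (cvec Q)) = LinearMap.ker (NMat Q).mulVecLin := by
  apply Submodule.eq_of_le_of_finrank_le
  · rw [Submodule.span_le]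
    rintro _ ⟨f, rfl⟩
    rw [SetLike.mem_coe, LinearMap.mem_ker, Matrix.mulVecLin_apply]
    exact cvec_mem_ker Q f
  · rw [finrank_ker_NMat Q hP, finrank_span_eq_card (cvec_indep Q hP hNL)]

lemma AT_injective (hP : Q.IsProper) (hNL : Q.NoLoopTrack) :
    Function.Injective (AMat Q)ᵀ.mulVecLin := by
  rw [← LinearMap.ker_eq_bot, LinearMap.ker_eq_bot']
  intro α hα
  have hz : ∀ z, ∑ f, AMat Q f z * α f = 0 := by
    intro z
    have := congrFun hα z
    rwa [Matrix.mulVecLin_apply, AT_mulVec] at this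
  set β : ES Q → ℝ :=
    fun e => ∑ f ∈ Finset.univ.filter (fun f => e.1 ∈ Q.sides f), α f with hβdef
  have hker : (NMat Q).mulVec β = 0 := by
    funext z
    rw [Matrix.mulVec, Pi.zero_apply]
    show (∑ e : ES Q, NMat Q z e * β e) = 0
    have step : ∀ e : ES Q, NMat Q z e * β e
        = ∑ f, (if e.1 ∈ Q.sides f then (if z ∈ e.1 then (1:ℝ) else 0) * α f else 0) := by
      intro e
      rw [NMat]
      show (if z ∈ e.1 then (1:ℝ) else 0)
          * (∑ f ∈ Finset.univ.filter (fun f => e.1 ∈ Q.sides f), α f) = _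
      rw [Finset.sum_filter, Finset.mul_sum]
      apply Finset.sum_congr rfl
      intro f _
      split_ifs <;> ring
    rw [Finset.sum_congr rfl fun e _ => step e, Finset.sum_comm]
    have inner : ∀ f, ∑ e : ES Q, (if e.1 ∈ Q.sides f then (if z ∈ e.1 then (1:ℝ) else 0) * α f else 0)
        = 2 * (sigvec Q z * AMat Q f z) * α f := by
      intro f
      rw [sum_edge_subtype Q (fun e' => (if z ∈ e' then (1:ℝ) else 0) * α f) f,
        ← Finset.sum_mul, count_sides Q f z, ind_eq_sig Q f z]
    rw [Finset.sum_congr rfl fun f _ => inner f]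
    have : ∀ f, 2 * (sigvec Q z * AMat Q f z) * α f = (2 * sigvec Q z) * (AMat Q f z * α f) := by
      intro f; ring
    rw [Finset.sum_congr rfl fun f _ => this f, ← Finset.mul_sum, hz z, mul_zero]
  have hmem : β ∈ LinearMap.ker (NMat Q).mulVecLin := by
    rw [LinearMap.mem_ker, Matrix.mulVecLin_apply]
    exact hker
  rw [← span_cvec_eq Q hP hNL] at hmem
  obtain ⟨γ, hγ⟩ := (Submodule.mem_span_range_iff_exists_fun ℝ).mp hmem
  have h : ∀ e : ES Q, ∑ f, γ f * cvec Q f e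
      = ∑ f ∈ Finset.univ.filter (fun f => e.1 ∈ Q.sides f), α f := by
    intro e
    have h1 := congrFun hγ e
    rw [Finset.sum_apply] at h1
    simp only [Pi.smul_apply, smul_eq_mul] at h1
    rw [h1, hβdef]
  funext f
  exact (propagation (combination_to_H Q h) hP hNL f).1

/-- Surjectivity of the alternating-sum map `Φ`. -/
lemma Phi_surjective (hP : Q.IsProper) (hNL : Q.NoLoopTrack) (t : F → ℝ) :
    ∃ h : V → ℝ, ∀ f, h (Q.x f) + h (Q.y f) - h (Q.u f) - h (Q.v f) = t f := by
  have hrankT : (AMat Q)ᵀ.rank = Fintype.card F := by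
    have h1 : (AMat Q)ᵀ.rank
        = Module.finrank ℝ (LinearMap.range (AMat Q)ᵀ.mulVecLin) := rfl
    rw [h1, LinearMap.finrank_range_of_inj (AT_injective Q hP hNL), Module.finrank_pi]
  have hrank : (AMat Q).rank = Fintype.card F := by
    rw [← Matrix.rank_transpose, hrankT]
  have hrange : LinearMap.range (AMat Q).mulVecLin = ⊤ := by
    apply Submodule.eq_top_of_finrank_eq
    have h1 : (AMat Q).rank
        = Module.finrank ℝ (LinearMap.range (AMat Q).mulVecLin) := rfl
    rw [← h1, hrank, Module.finrank_pi]
  obtain ⟨h, hh⟩ := LinearMap.range_eq_top.mp hrange t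
  refine ⟨h, fun f => ?_⟩
  have := congrFun hh f
  rwa [Matrix.mulVecLin_apply, AMat_mulVec] at this

end LinAlg

end KashaevAux

/-- Any free-fermionic C₂⁽¹⁾ loop model on a connected finite planar
quadrangulation with boundary, whose train tracks never loop, admits Kashaev's
parametrization by vertex variables, up to a positive constant at each face. -/
theorem kashaev_parametrization_exists {V F : Type*} [Fintype V] [DecidableEq V]
    [Fintype F] [DecidableEq F]
    (Q : QuadData V F) (hP : Q.IsProper) (hNL : Q.NoLoopTrack)
    (w1 w2 w3 w4 w5 : F → ℝ)
    (hpos : ∀ f, 0 < w1 f ∧ 0 < w2 f ∧ 0 < w3 f ∧ 0 < w4 f ∧ 0 < w5 f)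
    (hff1 : ∀ f, w1 f * w4 f = w3 f * w5 f)
    (hff2 : ∀ f, w2 f * w3 f = w4 f * w5 f)
    (hff3 : ∀ f, w5 f * (w1 f + w2 f) = w3 f * w4 f) :
    ∃ (g : V → ℝ) (c : F → ℝ), (∀ a, 0 < g a) ∧ (∀ f, 0 < c f) ∧
      ∀ f, c f * w1 f = g (Q.x f) * g (Q.y f) ∧
        c f * w2 f = g (Q.u f) * g (Q.v f) ∧
        c f * w3 f = Real.sqrt (g (Q.x f) * g (Q.y f)) *
          Real.sqrt (g (Q.x f) * g (Q.y f) + g (Q.u f) * g (Q.v f)) ∧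
        c f * w4 f = Real.sqrt (g (Q.u f) * g (Q.v f)) *
          Real.sqrt (g (Q.x f) * g (Q.y f) + g (Q.u f) * g (Q.v f)) ∧
        c f * w5 f = Real.sqrt (g (Q.x f) * g (Q.y f) * g (Q.u f) * g (Q.v f)) := by
  obtain ⟨h, hh⟩ := KashaevAux.Phi_surjective Q hP hNL
    (fun f => Real.log (w1 f) - Real.log (w2 f))
  refine ⟨fun z => Real.exp (h z),
    fun f => Real.exp (h (Q.x f)) * Real.exp (h (Q.y f)) / w1 f,
    fun a => Real.exp_pos _, ?_, ?_⟩
  · intro f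
    exact div_pos (mul_pos (Real.exp_pos _) (Real.exp_pos _)) (hpos f).1
  · intro f
    obtain ⟨h1, h2, h3, h4, h5⟩ := hpos f
    set P : ℝ := Real.exp (h (Q.x f)) * Real.exp (h (Q.y f)) with hPdef
    set R : ℝ := Real.exp (h (Q.u f)) * Real.exp (h (Q.v f)) with hRdef
    set c : ℝ := P / w1 f with hcdef
    have hPpos : 0 < P := mul_pos (Real.exp_pos _) (Real.exp_pos _)
    have hRpos : 0 < R := mul_pos (Real.exp_pos _) (Real.exp_pos _)
    have hcpos : 0 < c := div_pos hPpos h1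
    have hc1 : c * w1 f = P := div_mul_cancel₀ _ (ne_of_gt h1)
    have e1 : Real.exp (h (Q.x f) + h (Q.y f) - h (Q.u f) - h (Q.v f)) = P / R := by
      rw [Real.exp_sub, Real.exp_sub, Real.exp_add, div_div]
    have e2 : Real.exp (Real.log (w1 f) - Real.log (w2 f)) = w1 f / w2 f := by
      rw [Real.exp_sub, Real.exp_log h1, Real.exp_log h2]
    have e3 : P / R = w1 f / w2 f := by rw [← e1, hh f, e2]
    have key : P * w2 f = w1 f * R := (div_eq_div_iff (ne_of_gt hRpos) (ne_of_gt h2)).mp e3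
    have hc2 : c * w2 f = R := by
      rw [hcdef]
      rw [div_mul_eq_mul_div, key, mul_comm, mul_div_assoc, div_self (ne_of_gt h1), mul_one]
    -- free-fermionic consequences
    have h0 : w3 f * w4 f * (w1 f * w2 f - w5 f ^ 2) = 0 := by
      linear_combination (w2 f * w3 f) * hff1 f + (w3 f * w5 f) * hff2 f
    have hw5sq : w5 f ^ 2 = w1 f * w2 f := by
      rcases mul_eq_zero.mp h0 with hz | hz
      · exact absurd hz (ne_of_gt (mul_pos h3 h4))
      · linarith
    have h0' : w4 f * w5 f * (w3 f ^ 2 - w1 f * (w1 f + w2 f)) = 0 := by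
      linear_combination (-(w3 f * w5 f)) * hff3 f - ((w1 f + w2 f) * w5 f) * hff1 f
    have hw3sq : w3 f ^ 2 = w1 f * (w1 f + w2 f) := by
      rcases mul_eq_zero.mp h0' with hz | hz
      · exact absurd hz (ne_of_gt (mul_pos h4 h5))
      · linarith
    have h0'' : w3 f * w5 f * (w4 f ^ 2 - w2 f * (w1 f + w2 f)) = 0 := by
      linear_combination (-(w4 f * w5 f)) * hff3 f - ((w1 f + w2 f) * w5 f) * hff2 f
    have hw4sq : w4 f ^ 2 = w2 f * (w1 f + w2 f) := by
      rcases mul_eq_zero.mp h0'' with hz | hz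
      · exact absurd hz (ne_of_gt (mul_pos h3 h5))
      · linarith
    refine ⟨hc1, hc2, ?_, ?_, ?_⟩
    · have sq3 : (c * w3 f) ^ 2 = P * (P + R) := by
        linear_combination c ^ 2 * hw3sq + (c * w1 f + P) * hc1 + (c * w1 f) * hc2 + R * hc1
      calc c * w3 f = Real.sqrt ((c * w3 f) ^ 2) :=
            (Real.sqrt_sq (le_of_lt (mul_pos hcpos h3))).symm
        _ = Real.sqrt (P * (P + R)) := by rw [sq3]
        _ = Real.sqrt P * Real.sqrt (P + R) := Real.sqrt_mul (le_of_lt hPpos) _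
    · have sq4 : (c * w4 f) ^ 2 = R * (P + R) := by
        linear_combination c ^ 2 * hw4sq + (c * w2 f) * hc1 + P * hc2 + (c * w2 f + R) * hc2
      calc c * w4 f = Real.sqrt ((c * w4 f) ^ 2) :=
            (Real.sqrt_sq (le_of_lt (mul_pos hcpos h4))).symm
        _ = Real.sqrt (R * (P + R)) := by rw [sq4]
        _ = Real.sqrt R * Real.sqrt (P + R) := Real.sqrt_mul (le_of_lt hRpos) _
    · have sq5 : (c * w5 f) ^ 2
          = Real.exp (h (Q.x f)) * Real.exp (h (Q.y f)) * Real.exp (h (Q.u f))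
            * Real.exp (h (Q.v f)) := by
        have hPR : P * R = Real.exp (h (Q.x f)) * Real.exp (h (Q.y f)) * Real.exp (h (Q.u f))
            * Real.exp (h (Q.v f)) := by rw [hPdef, hRdef]; ring
        rw [← hPR]
        linear_combination c ^ 2 * hw5sq + (c * w1 f) * hc2 + R * hc1
      calc c * w5 f = Real.sqrt ((c * w5 f) ^ 2) :=
            (Real.sqrt_sq (le_of_lt (mul_pos hcpos h5))).symm
        _ = _ := by rw [sq5]
end

section
/- Let g, g1, g2, g3, g12, g13, g23 > 0, X = √(g·g23+g2·g3), Y = √(g·g13+g1·g3), Z = √(g·g12+g1·g2), and g123 = (2g1g2g3 + g(g1g23+g2g13+g3g12) + 2XYZ)/g². Then g123 > 0, and g123 is the larger of the two roots of Kashaev's relation viewed as a quadratic polynomial in its last variable. -/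
theorem kashaev_greatest_root
    (g g1 g2 g3 g12 g13 g23 X Y Z g123 : ℝ)
    (hg : 0 < g) (hg1 : 0 < g1) (hg2 : 0 < g2) (hg3 : 0 < g3)
    (hg12 : 0 < g12) (hg13 : 0 < g13) (hg23 : 0 < g23)
    (hX : X = Real.sqrt (g * g23 + g2 * g3))
    (hY : Y = Real.sqrt (g * g13 + g1 * g3))
    (hZ : Z = Real.sqrt (g * g12 + g1 * g2))
    (hg123 : g123 = (2 * g1 * g2 * g3 + g * (g1 * g23 + g2 * g13 + g3 * g12)
      + 2 * X * Y * Z) / g ^ 2) :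
    0 < g123 ∧
    (g ^ 2 * g123 ^ 2
      - 2 * g123 * (g * (g1 * g23 + g2 * g13 + g3 * g12) + 2 * g1 * g2 * g3)
      + (g1 ^ 2 * g23 ^ 2 + g2 ^ 2 * g13 ^ 2 + g3 ^ 2 * g12 ^ 2
        - 2 * g2 * g3 * g13 * g12 - 2 * g1 * g3 * g23 * g12 - 2 * g1 * g2 * g23 * g13
        - 4 * g * g12 * g23 * g13) = 0) ∧
    ∀ t : ℝ,
      g ^ 2 * t ^ 2
        - 2 * t * (g * (g1 * g23 + g2 * g13 + g3 * g12) + 2 * g1 * g2 * g3)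
        + (g1 ^ 2 * g23 ^ 2 + g2 ^ 2 * g13 ^ 2 + g3 ^ 2 * g12 ^ 2
          - 2 * g2 * g3 * g13 * g12 - 2 * g1 * g3 * g23 * g12 - 2 * g1 * g2 * g23 * g13
          - 4 * g * g12 * g23 * g13) = 0 → t ≤ g123 := by
  have hX0 : 0 ≤ X := hX ▸ Real.sqrt_nonneg _
  have hY0 : 0 ≤ Y := hY ▸ Real.sqrt_nonneg _
  have hZ0 : 0 ≤ Z := hZ ▸ Real.sqrt_nonneg _
  have hX2 : X ^ 2 = g * g23 + g2 * g3 := by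
    rw [hX]; exact Real.sq_sqrt (by positivity)
  have hY2 : Y ^ 2 = g * g13 + g1 * g3 := by
    rw [hY]; exact Real.sq_sqrt (by positivity)
  have hZ2 : Z ^ 2 = g * g12 + g1 * g2 := by
    rw [hZ]; exact Real.sq_sqrt (by positivity)
  have hg2' : (0:ℝ) < g ^ 2 := by positivity
  have hk : g ^ 2 * g123 = g * (g1 * g23 + g2 * g13 + g3 * g12) + 2 * g1 * g2 * g3
      + 2 * X * Y * Z := by
    rw [hg123]; field_simp; ring
  have hu0 : 0 ≤ 2 * X * Y * Z := by positivity
  have hpos : 0 < g123 := by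
    have hnum : 0 < 2 * g1 * g2 * g3 + g * (g1 * g23 + g2 * g13 + g3 * g12)
        + 2 * X * Y * Z := by
      nlinarith [mul_pos (mul_pos hg1 hg2) hg3,
        mul_pos hg (mul_pos hg1 hg23), mul_pos hg (mul_pos hg2 hg13),
        mul_pos hg (mul_pos hg3 hg12)]
    rw [hg123]
    exact div_pos hnum hg2'
  refine ⟨hpos, ?_, ?_⟩
  · have h : g ^ 2 * (g ^ 2 * g123 ^ 2
      - 2 * g123 * (g * (g1 * g23 + g2 * g13 + g3 * g12) + 2 * g1 * g2 * g3)
      + (g1 ^ 2 * g23 ^ 2 + g2 ^ 2 * g13 ^ 2 + g3 ^ 2 * g12 ^ 2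
        - 2 * g2 * g3 * g13 * g12 - 2 * g1 * g3 * g23 * g12 - 2 * g1 * g2 * g23 * g13
        - 4 * g * g12 * g23 * g13)) = 0 := by
      linear_combination (g ^ 2 * g123 + 2 * X * Y * Z
          - (g * (g1 * g23 + g2 * g13 + g3 * g12) + 2 * g1 * g2 * g3)) * hk
        + 4 * Y ^ 2 * Z ^ 2 * hX2
        + 4 * (g * g23 + g2 * g3) * Z ^ 2 * hY2
        + 4 * (g * g23 + g2 * g3) * (g * g13 + g1 * g3) * hZ2
    rcases mul_eq_zero.mp h with h' | h'
    · exact absurd h' (ne_of_gt hg2')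
    · exact h'
  · intro t ht
    have hA : (g ^ 2 * t - (g * (g1 * g23 + g2 * g13 + g3 * g12) + 2 * g1 * g2 * g3)) ^ 2
        = (2 * X * Y * Z) ^ 2 := by
      linear_combination g ^ 2 * ht
        - 4 * Y ^ 2 * Z ^ 2 * hX2
        - 4 * (g * g23 + g2 * g3) * Z ^ 2 * hY2
        - 4 * (g * g23 + g2 * g3) * (g * g13 + g1 * g3) * hZ2
    have hle : g ^ 2 * t ≤ g ^ 2 * g123 := by nlinarith [hA, hu0, hk]
    exact le_of_mul_le_mul_left hle hg2'
end

section
/- Let R, S > 0 satisfy R²S² − 6RS − 4R − 4S − 3 = 0. Then θ := ((1+√(1+R))/(RS))·((1+√(1+S))/(RS)) satisfies 0 < θ < 1, and λ := 2(1+3θ)/(1−θ) lies in the interval (2, 3]; moreover λ = 3 if and only if R = S = 3. -/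
set_option maxHeartbeats 1000000 in
theorem kashaev_limit_shape_parameter
    (R S θ lam : ℝ) (hR : 0 < R) (hS : 0 < S)
    (hrel : R ^ 2 * S ^ 2 - 6 * R * S - 4 * R - 4 * S - 3 = 0)
    (hθ : θ = ((1 + Real.sqrt (1 + R)) / (R * S)) * ((1 + Real.sqrt (1 + S)) / (R * S)))
    (hlam : lam = 2 * (1 + 3 * θ) / (1 - θ)) :
    0 < θ ∧ θ < 1 ∧ 2 < lam ∧ lam ≤ 3 ∧ (lam = 3 ↔ R = 3 ∧ S = 3) := by
  set u := Real.sqrt (1 + R) with hu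
  set v := Real.sqrt (1 + S) with hv
  have hu2 : u ^ 2 = 1 + R := Real.sq_sqrt (by linarith)
  have hv2 : v ^ 2 = 1 + S := Real.sq_sqrt (by linarith)
  have hu1 : 1 < u := by
    nlinarith [Real.sqrt_nonneg (1 + R), hu2]
  have hv1 : 1 < v := by
    nlinarith [Real.sqrt_nonneg (1 + S), hv2]
  -- factorization of the relation
  have key : (u * v - u - v) * ((u * v + u + v) * ((u * v - u + v) * (u * v + u - v))) = 0 := by
    have h1 : (u * v - u - v) * ((u * v + u + v) * ((u * v - u + v) * (u * v + u - v)))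
        = (u ^ 2) ^ 2 * (v ^ 2) ^ 2 - 2 * (u ^ 2) * (v ^ 2) * ((u ^ 2) + (v ^ 2))
          + ((u ^ 2) - (v ^ 2)) ^ 2 := by ring
    rw [h1, hu2, hv2]
    linear_combination hrel
  have huv : u * v = u + v := by
    have h2 : (u * v + u + v) * ((u * v - u + v) * (u * v + u - v)) > 0 := by
      have : u * v - u + v > 0 := by nlinarith
      have : u * v + u - v > 0 := by nlinarith
      have : u * v + u + v > 0 := by nlinarith
      positivity
    have := mul_eq_zero.mp key
    rcases this with h | h
    · linarith
    · linarith [h2.ne' h]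
  -- sum bound via AM-GM
  have hsum : 4 ≤ u + v := by nlinarith [sq_nonneg (u - v)]
  have hRS : R * S = (1 + u) * (1 + v) := by
    have hR' : R = u ^ 2 - 1 := by linarith
    have hS' : S = v ^ 2 - 1 := by linarith
    rw [hR', hS']
    linear_combination ((1 + u) * (1 + v)) * huv
  have hP : (1 + u) * (1 + v) = 1 + 2 * (u + v) := by
    linear_combination huv
  have hP9 : 9 ≤ (1 + u) * (1 + v) := by rw [hP]; linarith
  have hPpos : 0 < (1 + u) * (1 + v) := by linarith
  have hθ' : θ = 1 / ((1 + u) * (1 + v)) := by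
    rw [hθ, hRS]
    field_simp
  have hθpos : 0 < θ := by rw [hθ']; positivity
  have hθ9 : θ ≤ 1 / 9 := by
    rw [hθ']
    rw [div_le_div_iff₀ hPpos (by norm_num)]
    linarith
  have h1θ : 0 < 1 - θ := by linarith
  have hlam' : lam * (1 - θ) = 2 * (1 + 3 * θ) := by
    rw [hlam]; field_simp
  refine ⟨hθpos, by linarith, by nlinarith, by nlinarith, ?_⟩
  constructor
  · intro h3
    have hθeq : θ = 1 / 9 := by
      rw [h3] at hlam'; linarith
    have hPθ : θ * ((1 + u) * (1 + v)) = 1 := by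
      rw [hθ']; field_simp
    have hPeq : (1 + u) * (1 + v) = 9 := by
      rw [hθeq] at hPθ; linarith
    have hsum4 : u + v = 4 := by rw [hP] at hPeq; linarith
    have huv4 : u * v = 4 := by rw [huv, hsum4]
    have huveq : u = v := by nlinarith [sq_nonneg (u - v)]
    have hu2' : u = 2 := by linarith
    have hv2' : v = 2 := by linarith
    rw [hu2'] at hu2
    rw [hv2'] at hv2
    norm_num at hu2 hv2
    constructor <;> linarith
  · rintro ⟨hR3, hS3⟩
    have hu2' : u = 2 := by
      have : u ^ 2 = 4 := by rw [hu2, hR3]; norm_num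
      nlinarith
    have hv2' : v = 2 := by
      have : v ^ 2 = 4 := by rw [hv2, hS3]; norm_num
      nlinarith
    have : θ = 1 / 9 := by rw [hθ', hu2', hv2']; norm_num
    rw [hlam, this]; norm_num
end
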